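/- arXiv:2002.00309 — 2 statements merged into one kernel-verified Lean document; each statement's English description precedes it below -/
import Mathlib

section
/- For n, m ≥ 2, mbt(K_{2n} □ C_{2m}) = 2n + 2 = Δ(K_{2n} □ C_{2m}) + 1. -/
open SimpleGraph
open scoped Classical

/-- A matching book embedding of `G` in `k` pages: a linear order (spine) on the
vertices together with a page assignment for the edges such that each page is a
matching (every vertex has degree at most one per page) and edges on the same
page do not cross with respect to the spine order. -/
structure MatchingBookEmbedding {V : Type*} [Fintype V] (G : SimpleGraph V) (k : ℕ) where
  ord : V ≃ Fin (Fintype.card V)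
  page : G.edgeSet → Fin k
  matching : ∀ e f : G.edgeSet, e ≠ f → page e = page f →
    ∀ v : V, v ∈ (e : Sym2 V) → v ∉ (f : Sym2 V)
  noncross : ∀ e f : G.edgeSet, page e = page f →
    ∀ a b c d : V, (e : Sym2 V) = s(a, b) → (f : Sym2 V) = s(c, d) →
      ord a < ord c → ord c < ord b → ord b < ord d → False

/-- The matching book thickness: the minimum number of pages over all matching
book embeddings. -/
noncomputable def mbt {V : Type*} [Fintype V] (G : SimpleGraph V) : ℕ :=
  sInf {k | Nonempty (MatchingBookEmbedding G k)}

/-!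
In a matching book embedding of a `k`-regular graph in `k` pages every page is a perfect matching.
The page of an edge `uv` then pairs up the vertices strictly between `u` and `v` on the spine (the
partner of such a vertex cannot lie outside without crossing `uv`), so adjacent vertices sit at
positions of opposite parity and the graph is bipartite. `K_N □ C_M` is `(N + 1)`-regular and
contains triangles, so it needs at least `N + 2` pages.

For `N + 2` pages, lay the copies `K_N × {j}` consecutively along the spine, alternately forwards
and backwards. Inside a copy use the `N`-page book of `K_N` that puts `ab` on page `a + b mod N`.
The rungs between copies `j` and `j + 1` are nested around the midpoint of these two copies and go
to page `N + j mod 2`; the rungs closing the cycle are nested around the midpoint of the spine,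
enclose the blocks of the rungs with odd `j`, and go to page `N + 1`.
-/

theorem Function.Involutive.even_card {α : Type*} [Fintype α] {f : α → α}
    (hf : f.Involutive) (hne : ∀ x, f x ≠ x) : Even (Fintype.card α) := by
  have hsupp : (hf.toPerm f).support = Finset.univ :=
    Finset.eq_univ_of_forall fun x => Equiv.Perm.mem_support.mpr (hne x)
  have hsq : hf.toPerm f ^ 2 = 1 := Equiv.ext fun x => hf x
  simpa [even_iff_two_dvd, hsupp] using Equiv.Perm.two_dvd_card_support hsq

namespace MatchingBookEmbedding

variable {V : Type*} [Fintype V] {G : SimpleGraph V} {k : ℕ}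

lemma eq_of_adj_of_page_eq (B : MatchingBookEmbedding G k) {x y z : V} (hxy : G.Adj x y)
    (hxz : G.Adj x z) (h : B.page ⟨s(x, y), hxy⟩ = B.page ⟨s(x, z), hxz⟩) : y = z := by
  by_contra hyz
  have hne : (⟨s(x, y), hxy⟩ : G.edgeSet) ≠ ⟨s(x, z), hxz⟩ := fun h =>
    hyz (Sym2.congr_right.mp (congrArg Subtype.val h))
  exact B.matching _ _ hne h x (Sym2.mem_mk_left x y) (Sym2.mem_mk_left x z)

lemma page_injective_incidenceSet (B : MatchingBookEmbedding G k) (v : V) :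
    Function.Injective fun e : G.incidenceSet v => B.page ⟨e, e.2.1⟩ := by
  rintro ⟨e, he, hve⟩ ⟨f, hf, hvf⟩ h
  obtain rfl : e = f := by
    by_contra hef
    exact B.matching ⟨e, he⟩ ⟨f, hf⟩ (fun h' => hef (congrArg Subtype.val h')) h v hve hvf
  rfl

lemma degree_le (B : MatchingBookEmbedding G k) (v : V) [Fintype (G.neighborSet v)] :
    G.degree v ≤ k := by
  classical
  simpa [G.card_incidenceSet_eq_degree] using
    Fintype.card_le_of_injective _ (B.page_injective_incidenceSet v)

lemma exists_adj_page_eq (B : MatchingBookEmbedding G k) [G.LocallyFinite]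
    (hG : G.IsRegularOfDegree k) (x : V) (p : Fin k) :
    ∃ y, ∃ h : G.Adj x y, B.page ⟨s(x, y), h⟩ = p := by
  classical
  have hcard : Fintype.card (G.incidenceSet x) = Fintype.card (Fin k) := by
    rw [G.card_incidenceSet_eq_degree, hG.degree_eq, Fintype.card_fin]
  obtain ⟨⟨e, he, hxe⟩, rfl⟩ :=
    ((Fintype.bijective_iff_injective_and_card _).mpr
      ⟨B.page_injective_incidenceSet x, hcard⟩).2 p
  obtain ⟨y, rfl⟩ := Sym2.mem_iff_exists.mp hxe
  exact ⟨y, he, rfl⟩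

lemma ord_mem_Ioo_of_page_eq (B : MatchingBookEmbedding G k) {u v x y : V} (huv : G.Adj u v)
    (hxy : G.Adj x y) (hp : B.page ⟨s(x, y), hxy⟩ = B.page ⟨s(u, v), huv⟩)
    (hx : B.ord x ∈ Set.Ioo (B.ord u) (B.ord v)) (hyu : y ≠ u) (hyv : y ≠ v) :
    B.ord y ∈ Set.Ioo (B.ord u) (B.ord v) := by
  constructor
  · refine lt_of_le_of_ne (not_lt.mp fun h => ?_) fun h => hyu (B.ord.injective h).symm
    exact B.noncross _ _ hp y x u v Sym2.eq_swap rfl h hx.1 hx.2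
  · refine lt_of_le_of_ne (not_lt.mp fun h => ?_) fun h => hyv (B.ord.injective h)
    exact B.noncross _ _ hp.symm u v x y rfl rfl hx.1 hx.2 h

lemma even_ord_sub_of_adj (B : MatchingBookEmbedding G k) [G.LocallyFinite]
    (hG : G.IsRegularOfDegree k) {u v : V} (huv : G.Adj u v) :
    Even ((B.ord v : ℕ) - B.ord u - 1) := by
  set p := B.page ⟨s(u, v), huv⟩
  choose F hFadj hFpage using fun x => B.exists_adj_page_eq hG x p
  have hF_eq : ∀ x y (h : G.Adj x y), B.page ⟨s(x, y), h⟩ = p → F x = y := fun x y h hp =>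
    B.eq_of_adj_of_page_eq (hFadj x) h ((hFpage x).trans hp.symm)
  have hF_invol : F.Involutive := fun x =>
    hF_eq _ _ (hFadj x).symm ((congrArg B.page (Subtype.ext Sym2.eq_swap)).trans (hFpage x))
  have hFu : F u = v := hF_eq u v huv rfl
  have hFv : F v = u := by rw [← hFu, hF_invol]
  let S := {x // B.ord x ∈ Set.Ioo (B.ord u) (B.ord v)}
  let f : S → S := fun x => ⟨F x, B.ord_mem_Ioo_of_page_eq huv (hFadj x) (hFpage x) x.2
    (fun h => x.2.2.ne (by rw [← hF_invol x, h, hFu]))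
    (fun h => x.2.1.ne' (by rw [← hF_invol x, h, hFv]))⟩
  have hcard : Even (Fintype.card S) :=
    Function.Involutive.even_card (f := f) (fun x => Subtype.ext (hF_invol x))
      (fun x h => (hFadj x).ne' (congrArg Subtype.val h))
  rwa [Fintype.card_congr (B.ord.subtypeEquiv fun _ => Iff.rfl), Fintype.card_Ioo,
    Fin.card_Ioo] at hcard

lemma ord_mod_two_ne_of_adj (B : MatchingBookEmbedding G k) [G.LocallyFinite]
    (hG : G.IsRegularOfDegree k) {u v : V} (huv : G.Adj u v) :
    (B.ord u : ℕ) % 2 ≠ (B.ord v : ℕ) % 2 := by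
  have huv' := Nat.even_iff.mp (B.even_ord_sub_of_adj hG huv)
  have hvu := Nat.even_iff.mp (B.even_ord_sub_of_adj hG huv.symm)
  have hne : (B.ord u : ℕ) ≠ B.ord v := Fin.val_ne_of_ne (B.ord.injective.ne huv.ne)
  omega

lemma colorable_two (B : MatchingBookEmbedding G k) [G.LocallyFinite]
    (hG : G.IsRegularOfDegree k) : G.Colorable 2 :=
  ⟨SimpleGraph.Coloring.mk (fun v => ⟨(B.ord v : ℕ) % 2, Nat.mod_lt _ two_pos⟩)
    fun huv h => B.ord_mod_two_ne_of_adj hG huv (congrArg Fin.val h)⟩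

lemma lt_of_isRegularOfDegree (B : MatchingBookEmbedding G k) [Nonempty V] [G.LocallyFinite]
    {d : ℕ} (hG : G.IsRegularOfDegree d) (hc : ¬ G.Colorable 2) : d < k := by
  obtain ⟨v⟩ := ‹Nonempty V›
  refine lt_of_le_of_ne (hG.degree_eq v ▸ B.degree_le v) fun hdk => hc ?_
  subst hdk
  exact B.colorable_two hG

end MatchingBookEmbedding

lemma mbt_eq_of_forall_le {V : Type*} [Fintype V] {G : SimpleGraph V} {k : ℕ}
    (B : MatchingBookEmbedding G k) (h : ∀ {k'}, MatchingBookEmbedding G k' → k ≤ k') :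
    mbt G = k :=
  le_antisymm (Nat.sInf_le ⟨B⟩) (le_csInf ⟨k, ⟨B⟩⟩ fun _ ⟨B'⟩ => h B')

namespace SimpleGraph

abbrev completeBoxCycle (N M : ℕ) : SimpleGraph (Fin N × Fin M) :=
  (⊤ : SimpleGraph (Fin N)) □ cycleGraph M

variable {N M : ℕ}

lemma cycleGraph_adj_cases {i j : Fin M} (h : (cycleGraph M).Adj i j) :
    (i : ℕ) + 1 = j ∨ (j : ℕ) + 1 = i ∨
      (i : ℕ) = 0 ∧ (j : ℕ) = M - 1 ∨ (j : ℕ) = 0 ∧ (i : ℕ) = M - 1 := by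
  have hi := i.isLt
  have hj := j.isLt
  rcases lt_or_gt_of_ne h.ne with hij | hji
  · rw [cycleGraph_adj', Fin.coe_sub_iff_lt.mpr hij, Fin.coe_sub_iff_le.mpr hij.le] at h
    omega
  · rw [cycleGraph_adj', Fin.coe_sub_iff_le.mpr hji.le, Fin.coe_sub_iff_lt.mpr hji] at h
    omega

lemma val_mod_two_ne_of_cycleGraph_adj (hM : Even M) {i j : Fin M}
    (h : (cycleGraph M).Adj i j) : (i : ℕ) % 2 ≠ (j : ℕ) % 2 := by
  obtain ⟨m, rfl⟩ := hM
  have := cycleGraph_adj_cases h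
  omega

lemma isRegularOfDegree_completeBoxCycle [(completeBoxCycle N M).LocallyFinite] (hN : 1 ≤ N)
    (hM : 3 ≤ M) : (completeBoxCycle N M).IsRegularOfDegree (N + 1) := by
  obtain ⟨M, rfl⟩ : ∃ M', M = M' + 3 := ⟨M - 3, by omega⟩
  intro v
  rw [degree_boxProd, complete_graph_degree, cycleGraph_degree_three_le, Fintype.card_fin]
  omega

lemma maxDegree_completeBoxCycle [DecidableRel (completeBoxCycle N M).Adj] (hN : 1 ≤ N)
    (hM : 3 ≤ M) : (completeBoxCycle N M).maxDegree = N + 1 := by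
  have : Nonempty (Fin N × Fin M) := ⟨(⟨0, by omega⟩, ⟨0, by omega⟩)⟩
  apply IsRegularOfDegree.maxDegree_eq
  convert isRegularOfDegree_completeBoxCycle hN hM

lemma not_colorable_two_top_boxProd (H : SimpleGraph (Fin M)) (hN : 3 ≤ N) (hM : 1 ≤ M) :
    ¬ ((⊤ : SimpleGraph (Fin N)) □ H).Colorable 2 := fun hc => by
  let x : Fin N → Fin N × Fin M := fun i => (i, ⟨0, hM⟩)
  have hadj : ∀ i j : Fin N, i ≠ j → ((⊤ : SimpleGraph (Fin N)) □ H).Adj (x i) (x j) :=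
    fun i j hij => boxProd_adj.mpr (Or.inl ⟨hij, rfl⟩)
  refine hc.cliqueFree (by norm_num : 2 < 3)
    {x ⟨0, by omega⟩, x ⟨1, by omega⟩, x ⟨2, by omega⟩} ?_
  rw [is3Clique_triple_iff]
  exact ⟨hadj _ _ (by simp), hadj _ _ (by simp), hadj _ _ (by simp)⟩

end SimpleGraph

lemma Nat.not_add_modEq_add_of_lt {N a b c d : ℕ} (hac : a < c) (hcb : c < b) (hbd : b < d)
    (hd : d < N) : ¬ a + b ≡ c + d [MOD N] := fun h => by
  have hdvd : N ∣ c + d - (a + b) := (Nat.modEq_iff_dvd' (by omega)).mp h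
  have := Nat.le_of_dvd (by omega) hdvd
  omega

namespace SnakeBook

variable {N M : ℕ}

def snakeOrder : Fin N × Fin M ≃ Fin (Fintype.card (Fin N × Fin M)) :=
  (Equiv.prodComm _ _).trans <| (Equiv.prodShear (Equiv.refl (Fin M))
    fun j => if Even (j : ℕ) then Equiv.refl (Fin N) else Fin.revPerm).trans <|
    finProdFinEquiv.trans <| finCongr <| by
      rw [Fintype.card_prod, Fintype.card_fin, Fintype.card_fin, mul_comm]

def snake (v : Fin N × Fin M) : ℕ := if Even (v.2 : ℕ) then v.1 else N - 1 - v.1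

lemma snake_lt (v : Fin N × Fin M) : snake v < N := by
  have := v.1.isLt
  unfold snake
  split_ifs <;> omega

lemma snakeOrder_val (v : Fin N × Fin M) : (snakeOrder v : ℕ) = N * v.2 + snake v := by
  unfold snakeOrder snake
  split_ifs with h <;>
    simp only [finProdFinEquiv, Equiv.trans_apply, Equiv.prodComm_apply, Equiv.prodShear_apply,
      Prod.fst_swap, Prod.snd_swap, Equiv.refl_apply, h, ↓reduceIte, Fin.revPerm_apply,
      Equiv.coe_fn_mk, Fin.val_rev, finCongr_apply, Fin.cast_mk] <;>
    omega

lemma layer_le_of_snakeOrder_lt {u v : Fin N × Fin M} (h : snakeOrder u < snakeOrder v) :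
    (u.2 : ℕ) ≤ v.2 := by
  by_contra! hlt
  have hmul : N * (v.2 + 1) ≤ N * u.2 := Nat.mul_le_mul_left _ hlt
  have hval : (snakeOrder u : ℕ) < snakeOrder v := h
  rw [snakeOrder_val, snakeOrder_val] at hval
  have := snake_lt v
  rw [mul_add, mul_one] at hmul
  omega

lemma snakeOrder_lt_iff_of_layer_eq {u v : Fin N × Fin M} (h : u.2 = v.2) :
    snakeOrder u < snakeOrder v ↔ snake u < snake v := by
  rw [Fin.lt_def, snakeOrder_val, snakeOrder_val, h, Nat.add_lt_add_iff_left]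

lemma snake_add_snake_modEq {a b c d : Fin N × Fin M} (hb : b.2 = a.2) (hc : c.2 = a.2)
    (hd : d.2 = a.2) (h : (a.1 + b.1 : ℕ) ≡ c.1 + d.1 [MOD N]) :
    snake a + snake b ≡ snake c + snake d [MOD N] := by
  unfold snake
  rw [hb, hc, hd]
  split_ifs
  · exact h
  · refine Nat.ModEq.add_right_cancel h (congrArg (· % N) ?_)
    have := a.1.isLt
    have := b.1.isLt
    have := c.1.isLt
    have := d.1.isLt
    omega

lemma snakeOrder_add_snakeOrder {u v : Fin N × Fin M} (h1 : u.1 = v.1)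
    (h2 : (u.2 : ℕ) % 2 ≠ (v.2 : ℕ) % 2) :
    (snakeOrder u : ℕ) + snakeOrder v + 1 = N * (u.2 + v.2 + 1) := by
  have hsnake : snake u + snake v + 1 = N := by
    have := v.1.isLt
    unfold snake
    rw [h1]
    split_ifs with hu hv hv <;> rw [Nat.even_iff] at * <;> omega
  calc (snakeOrder u : ℕ) + snakeOrder v + 1 = N * (u.2 + v.2) + (snake u + snake v + 1) := by
        rw [snakeOrder_val, snakeOrder_val]; ring
    _ = N * (u.2 + v.2 + 1) := by rw [hsnake]; ring

def pageIdx (u v : Fin N × Fin M) : ℕ :=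
  if (u.2 : ℕ) = v.2 then (u.1 + v.1 : ℕ) % N
  else if (u.2 : ℕ) + 1 = v.2 then N + (u.2 : ℕ) % 2
  else if (v.2 : ℕ) + 1 = u.2 then N + (v.2 : ℕ) % 2
  else N + 1

lemma pageIdx_comm (u v : Fin N × Fin M) : pageIdx u v = pageIdx v u := by
  unfold pageIdx
  rw [Nat.add_comm (u.1 : ℕ)]
  split_ifs <;> omega

lemma pageIdx_lt (u v : Fin N × Fin M) : pageIdx u v < N + 2 := by
  have := Nat.mod_lt (u.1 + v.1 : ℕ) (Fin.pos u.1)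
  unfold pageIdx
  split_ifs <;> omega

variable (N M) in
def edgePage : Sym2 (Fin N × Fin M) → Fin (N + 2) :=
  Sym2.lift ⟨fun u v => ⟨pageIdx u v, pageIdx_lt u v⟩,
    fun u v => Fin.ext (pageIdx_comm u v)⟩

lemma edgePage_mk (u v : Fin N × Fin M) : (edgePage N M s(u, v) : ℕ) = pageIdx u v := rfl

lemma pageIdx_of_layer_eq {u v : Fin N × Fin M} (h : u.2 = v.2) :
    pageIdx u v = (u.1 + v.1 : ℕ) % N := by
  simp [pageIdx, h]

lemma pageIdx_of_cycleGraph_adj {u v : Fin N × Fin M} (h : (cycleGraph M).Adj u.2 v.2) :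
    (u.2 : ℕ) + 1 = v.2 ∧ pageIdx u v = N + (u.2 : ℕ) % 2 ∨
      (v.2 : ℕ) + 1 = u.2 ∧ pageIdx u v = N + (v.2 : ℕ) % 2 ∨
      ((u.2 : ℕ) = 0 ∧ (v.2 : ℕ) = M - 1 ∨ (v.2 : ℕ) = 0 ∧ (u.2 : ℕ) = M - 1) ∧
        pageIdx u v = N + 1 := by
  unfold pageIdx
  have := cycleGraph_adj_cases h
  have := Fin.val_ne_of_ne h.ne
  split_ifs <;> omega

lemma pageIdx_lt_iff {u v : Fin N × Fin M} (h : (completeBoxCycle N M).Adj u v) :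
    pageIdx u v < N ↔ u.2 = v.2 := by
  rcases boxProd_adj.mp h with ⟨-, h2⟩ | ⟨h2, -⟩
  · rw [pageIdx_of_layer_eq h2]
    exact iff_of_true (Nat.mod_lt _ (Fin.pos u.1)) h2
  · have := pageIdx_of_cycleGraph_adj h2
    simp only [h2.ne, iff_false]
    omega

lemma layer_eq_iff_of_pageIdx_eq {a b c d : Fin N × Fin M}
    (hab : (completeBoxCycle N M).Adj a b) (hcd : (completeBoxCycle N M).Adj c d)
    (hp : pageIdx a b = pageIdx c d) : a.2 = b.2 ↔ c.2 = d.2 := by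
  rw [← pageIdx_lt_iff hab, ← pageIdx_lt_iff hcd, hp]

lemma eq_of_pageIdx_eq (hM : Even M) {v w w' : Fin N × Fin M}
    (hw : (completeBoxCycle N M).Adj v w) (hw' : (completeBoxCycle N M).Adj v w')
    (h : pageIdx v w = pageIdx v w') : w = w' := by
  by_cases h2 : v.2 = w.2
  · have h2' : v.2 = w'.2 := (layer_eq_iff_of_pageIdx_eq hw hw' h).mp h2
    rw [pageIdx_of_layer_eq h2, pageIdx_of_layer_eq h2'] at h
    have h1 : (w.1 : ℕ) = w'.1 := by
      have := Nat.ModEq.add_left_cancel' _ h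
      rwa [Nat.ModEq, Nat.mod_eq_of_lt w.1.isLt, Nat.mod_eq_of_lt w'.1.isLt] at this
    exact Prod.ext (Fin.ext h1) (h2.symm.trans h2')
  · have h2' : v.2 ≠ w'.2 := mt (layer_eq_iff_of_pageIdx_eq hw hw' h).mpr h2
    obtain ⟨hc, h1⟩ := (boxProd_adj.mp hw).resolve_left fun h => h2 h.2
    obtain ⟨hc', h1'⟩ := (boxProd_adj.mp hw').resolve_left fun h => h2' h.2
    have := pageIdx_of_cycleGraph_adj hc
    have := pageIdx_of_cycleGraph_adj hc'
    obtain ⟨m, rfl⟩ := hM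
    exact Prod.ext (h1.symm.trans h1') (Fin.ext (by omega))

lemma not_crossing_of_layer_eq {a b c d : Fin N × Fin M} (hab : a.2 = b.2) (hcd : c.2 = d.2)
    (hp : (a.1 + b.1 : ℕ) ≡ c.1 + d.1 [MOD N]) (h1 : snakeOrder a < snakeOrder c)
    (h2 : snakeOrder c < snakeOrder b) (h3 : snakeOrder b < snakeOrder d) : False := by
  have hca : c.2 = a.2 := Fin.ext <| le_antisymm (hab ▸ layer_le_of_snakeOrder_lt h2)
    (layer_le_of_snakeOrder_lt h1)
  have hda : d.2 = a.2 := hcd.symm.trans hca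
  rw [snakeOrder_lt_iff_of_layer_eq hca.symm] at h1
  rw [snakeOrder_lt_iff_of_layer_eq (hca.trans hab)] at h2
  rw [snakeOrder_lt_iff_of_layer_eq (hab.symm.trans hda.symm)] at h3
  exact Nat.not_add_modEq_add_of_lt h1 h2 h3 (snake_lt d)
    (snake_add_snake_modEq hab.symm hca hda hp)

lemma not_crossing_of_layer_ne (hM : Even M) {a b c d : Fin N × Fin M}
    (hab : (cycleGraph M).Adj a.2 b.2) (ha : a.1 = b.1) (hcd : (cycleGraph M).Adj c.2 d.2)
    (hc : c.1 = d.1) (hp : pageIdx a b = pageIdx c d) (h1 : snakeOrder a < snakeOrder c)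
    (h2 : snakeOrder c < snakeOrder b) (h3 : snakeOrder b < snakeOrder d) : False := by
  have l1 := layer_le_of_snakeOrder_lt h1
  have l2 := layer_le_of_snakeOrder_lt h2
  have l3 := layer_le_of_snakeOrder_lt h3
  have hsum : N * (a.2 + b.2 + 1) < N * (c.2 + d.2 + 1) := by
    rw [← snakeOrder_add_snakeOrder ha (val_mod_two_ne_of_cycleGraph_adj hM hab),
      ← snakeOrder_add_snakeOrder hc (val_mod_two_ne_of_cycleGraph_adj hM hcd)]
    have : (snakeOrder a : ℕ) < snakeOrder c := h1
    have : (snakeOrder b : ℕ) < snakeOrder d := h3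
    omega
  have := Nat.lt_of_mul_lt_mul_left hsum
  have := pageIdx_of_cycleGraph_adj hab
  have := pageIdx_of_cycleGraph_adj hcd
  obtain ⟨m, rfl⟩ := hM
  omega

lemma not_crossing (hM : Even M) {a b c d : Fin N × Fin M}
    (hab : (completeBoxCycle N M).Adj a b) (hcd : (completeBoxCycle N M).Adj c d)
    (hp : pageIdx a b = pageIdx c d) (h1 : snakeOrder a < snakeOrder c)
    (h2 : snakeOrder c < snakeOrder b) (h3 : snakeOrder b < snakeOrder d) : False := by
  by_cases hab2 : a.2 = b.2
  · have hcd2 : c.2 = d.2 := (layer_eq_iff_of_pageIdx_eq hab hcd hp).mp hab2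
    rw [pageIdx_of_layer_eq hab2, pageIdx_of_layer_eq hcd2] at hp
    exact not_crossing_of_layer_eq hab2 hcd2 hp h1 h2 h3
  · have hcd2 : c.2 ≠ d.2 := mt (layer_eq_iff_of_pageIdx_eq hab hcd hp).mpr hab2
    obtain ⟨hab', ha⟩ := (boxProd_adj.mp hab).resolve_left fun h => hab2 h.2
    obtain ⟨hcd', hc⟩ := (boxProd_adj.mp hcd).resolve_left fun h => hcd2 h.2
    exact not_crossing_of_layer_ne hM hab' ha hcd' hc hp h1 h2 h3

def matchingBookEmbedding (hM : Even M) :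
    MatchingBookEmbedding (completeBoxCycle N M) (N + 2) where
  ord := snakeOrder
  page e := edgePage N M e
  matching e f hef hp v hve hvf := by
    obtain ⟨w, hw⟩ := Sym2.mem_iff_exists.mp hve
    obtain ⟨w', hw'⟩ := Sym2.mem_iff_exists.mp hvf
    have hp' := congrArg Fin.val hp
    simp only [hw, hw', edgePage_mk] at hp'
    have hvw := (completeBoxCycle N M).mem_edgeSet.mp (hw ▸ e.2)
    have hvw' := (completeBoxCycle N M).mem_edgeSet.mp (hw' ▸ f.2)
    exact hef (Subtype.ext (by rw [hw, hw', eq_of_pageIdx_eq hM hvw hvw' hp']))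
  noncross e f hp a b c d he hf := by
    have hp' := congrArg Fin.val hp
    simp only [he, hf, edgePage_mk] at hp'
    exact not_crossing hM ((completeBoxCycle N M).mem_edgeSet.mp (he ▸ e.2))
      ((completeBoxCycle N M).mem_edgeSet.mp (hf ▸ f.2)) hp'

end SnakeBook

lemma mbt_completeBoxCycle {N m : ℕ} (hN : 3 ≤ N) (hm : 2 ≤ m) :
    mbt (completeBoxCycle N (2 * m)) = N + 2 := by
  have : Nonempty (Fin N × Fin (2 * m)) := ⟨(⟨0, by omega⟩, ⟨0, by omega⟩)⟩
  refine mbt_eq_of_forall_le (SnakeBook.matchingBookEmbedding (even_two_mul m)) fun B => ?_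
  exact B.lt_of_isRegularOfDegree (isRegularOfDegree_completeBoxCycle (by omega) (by omega))
    (not_colorable_two_top_boxProd _ hN (by omega))

/-- For `n, m ≥ 2`, `mbt (K_{2n} □ C_{2m}) = 2n + 2 = Δ + 1`. -/
theorem stmt_10 (n m : ℕ) (hn : 2 ≤ n) (hm : 2 ≤ m) :
    mbt ((⊤ : SimpleGraph (Fin (2 * n))) □ cycleGraph (2 * m)) = 2 * n + 2 ∧
    ((⊤ : SimpleGraph (Fin (2 * n))) □ cycleGraph (2 * m)).maxDegree + 1 = 2 * n + 2 :=
  ⟨mbt_completeBoxCycle (by omega) hm, by rw [maxDegree_completeBoxCycle (by omega) (by omega)]⟩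
end

section
/- The hypercube graph Q_d (d ≥ 1) is dispersable: mbt(Q_d) = d. -/
open SimpleGraph
open scoped Classical

/-- The `d`-dimensional hypercube graph: vertices are binary strings of length
`d`, adjacent iff they differ in exactly one coordinate. -/
def hypercubeGraph (d : ℕ) : SimpleGraph (Fin d → Bool) where
  Adj x y := hammingDist x y = 1
  symm := ⟨fun x y h => by show hammingDist y x = 1; rwa [hammingDist_comm]⟩
  loopless := ⟨fun x h => by simp only [hammingDist_self] at h; exact one_ne_zero h.symm⟩

/-! Put the vertices on the spine in the order of the binary reflected Gray code. Two words that
differ only in coordinate `i` then sit mirror-symmetrically in one block of `2 ^ (i + 1)`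
consecutive positions, so the edges in direction `i` are nested and never cross, and the `d`
directions serve as the `d` pages. Conversely, the `d` edges at a vertex need `d` distinct
pages. -/

open Finset

section MatchingBookEmbedding

variable {V : Type*} [Fintype V] {G : SimpleGraph V} {k : ℕ}

theorem MatchingBookEmbedding.degree_le_s14 (B : MatchingBookEmbedding G k) (v : V) :
    G.degree v ≤ k := by
  rw [← card_incidenceSet_eq_degree]
  refine (Fintype.card_le_of_injective (fun e : G.incidenceSet v => B.page ⟨e, e.2.1⟩) ?_).trans
    (Fintype.card_fin k).le
  intro e f hef
  by_contra hne
  exact B.matching _ _ (by simpa [Subtype.ext_iff] using hne) hef v e.2.2 f.2.2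

theorem mbt_eq_of_le_degree (B : MatchingBookEmbedding G k) (v : V) (hv : k ≤ G.degree v) :
    mbt G = k :=
  le_antisymm (Nat.sInf_le ⟨B⟩)
    (le_csInf ⟨k, ⟨B⟩⟩ fun _ ⟨B'⟩ => hv.trans (B'.degree_le_s14 v))

end MatchingBookEmbedding

def MirroredInBlock (M a b : ℕ) : Prop :=
  ∃ q r s, a = M * q + r ∧ b = M * q + s ∧ r + s + 1 = M

theorem MirroredInBlock.not_crossing {M a b c e : ℕ} (hab : MirroredInBlock M a b)
    (hce : MirroredInBlock M c e) (hac : a < c) (hcb : c < b) (hbe : b < e) : False := by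
  obtain ⟨q, r, s, rfl, rfl, hrs⟩ := hab
  obtain ⟨q', r', s', rfl, rfl, hrs'⟩ := hce
  obtain hlt | rfl | hgt := lt_trichotomy q q'
  · have := Nat.mul_le_mul_left M (Nat.succ_le_of_lt hlt)
    rw [Nat.mul_succ] at this
    lia
  · lia
  · have := Nat.mul_le_mul_left M (Nat.succ_le_of_lt hgt)
    rw [Nat.mul_succ] at this
    lia

theorem mirroredInBlock_sum_two_pow {s t : Finset ℕ} {n : ℕ}
    (high : ∀ j, n ≤ j → (j ∈ s ↔ j ∈ t)) (low : ∀ j < n, (j ∈ s ↔ j ∉ t)) :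
    MirroredInBlock (2 ^ n) (∑ j ∈ s, 2 ^ j) (∑ j ∈ t, 2 ^ j) := by
  have hst : s.filter (n ≤ ·) = t.filter (n ≤ ·) := by
    ext j
    simp only [mem_filter]
    exact ⟨fun h => ⟨(high j h.2).1 h.1, h.2⟩, fun h => ⟨(high j h.2).2 h.1, h.2⟩⟩
  obtain ⟨q, hq⟩ : 2 ^ n ∣ ∑ j ∈ s with n ≤ j, 2 ^ j :=
    dvd_sum fun j hj => pow_dvd_pow 2 (mem_filter.1 hj).2
  have hlow : (∑ j ∈ s with ¬n ≤ j, 2 ^ j) + (∑ j ∈ t with ¬n ≤ j, 2 ^ j) + 1 = 2 ^ n := by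
    have hunion : (s.filter (¬n ≤ ·)) ∪ (t.filter (¬n ≤ ·)) = range n := by
      ext j
      simp only [mem_union, mem_filter, mem_range]
      by_cases hj : j < n
      · have := low j hj
        have : ¬n ≤ j := by lia
        tauto
      · simp [hj]
    have hdisj : Disjoint (s.filter (¬n ≤ ·)) (t.filter (¬n ≤ ·)) :=
      disjoint_left.2 fun j hs ht => by
        rw [mem_filter, not_le] at hs ht
        exact (low j hs.2).1 hs.1 ht.1
    rw [← sum_union hdisj, hunion, Nat.geomSum_eq le_rfl, Nat.div_one]
    exact Nat.sub_add_cancel Nat.one_le_two_pow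
  refine ⟨q, _, _, ?_, ?_, hlow⟩
  · rw [← sum_filter_add_sum_filter_not s (n ≤ ·), hq]
  · rw [← sum_filter_add_sum_filter_not t (n ≤ ·), ← hst, hq]

section DiffersOnlyAt

variable {ι α : Type*} {x y : ι → α} {i j : ι}

def DiffersOnlyAt (x y : ι → α) (i : ι) : Prop :=
  ∀ k, x k ≠ y k ↔ k = i

theorem DiffersOnlyAt.symm (h : DiffersOnlyAt x y i) : DiffersOnlyAt y x i :=
  fun k => ne_comm.trans (h k)

theorem DiffersOnlyAt.ne (h : DiffersOnlyAt x y i) : x i ≠ y i :=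
  (h i).2 rfl

theorem DiffersOnlyAt.eq_of_ne (h : DiffersOnlyAt x y i) {k : ι} (hk : k ≠ i) : x k = y k :=
  not_not.1 fun hne => hk ((h k).1 hne)

theorem DiffersOnlyAt.unique (hi : DiffersOnlyAt x y i) (hj : DiffersOnlyAt x y j) : i = j :=
  (hj i).1 hi.ne

theorem DiffersOnlyAt.right_unique {x y z : ι → Bool} (hy : DiffersOnlyAt x y i)
    (hz : DiffersOnlyAt x z i) : y = z := by
  funext k
  by_cases hk : k = i
  · subst hk
    rw [Bool.eq_not_iff.2 hy.ne.symm, Bool.eq_not_iff.2 hz.ne.symm]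
  · rw [← hy.eq_of_ne hk, hz.eq_of_ne hk]

theorem differsOnlyAt_update [DecidableEq ι] {b : α} (hb : b ≠ x i) :
    DiffersOnlyAt x (Function.update x i b) i := by
  intro k
  by_cases hk : k = i
  · subst hk
    simpa using hb.symm
  · simp [hk]

end DiffersOnlyAt

section Hypercube

variable {d : ℕ}

theorem hypercubeGraph_adj_iff {x y : Fin d → Bool} :
    (hypercubeGraph d).Adj x y ↔ ∃ i, DiffersOnlyAt x y i := by
  change #{k | x k ≠ y k} = 1 ↔ _
  simp only [card_eq_one, Finset.ext_iff, mem_filter, mem_univ, true_and, mem_singleton]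
  rfl

theorem le_degree_hypercubeGraph (x : Fin d → Bool) : d ≤ (hypercubeGraph d).degree x := by
  have hflip (i : Fin d) : DiffersOnlyAt x (Function.update x i !x i) i :=
    differsOnlyAt_update (Bool.not_ne_self _)
  rw [← card_neighborSet_eq_degree]
  refine le_of_eq_of_le (Fintype.card_fin d).symm (Fintype.card_le_of_injective
    (fun i => ⟨_, hypercubeGraph_adj_iff.2 ⟨i, hflip i⟩⟩ : Fin d → (hypercubeGraph d).neighborSet x)
    fun i j hij => (hflip i).unique ?_)
  rw [show Function.update x i (!x i) = Function.update x j (!x j) from congrArg Subtype.val hij]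
  exact hflip j

theorem exists_differsOnlyAt_of_mem_edgeSet {e : Sym2 (Fin d → Bool)}
    (he : e ∈ (hypercubeGraph d).edgeSet) : ∃ i, ∀ x y, e = s(x, y) → DiffersOnlyAt x y i := by
  induction e using Sym2.ind with
  | _ a b =>
  obtain ⟨i, hi⟩ := hypercubeGraph_adj_iff.1 he
  refine ⟨i, fun x y hxy => ?_⟩
  rcases Sym2.eq_iff.1 hxy with ⟨rfl, rfl⟩ | ⟨rfl, rfl⟩
  · exact hi
  · exact hi.symm

noncomputable def edgeDirection (e : (hypercubeGraph d).edgeSet) : Fin d :=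
  (exists_differsOnlyAt_of_mem_edgeSet e.2).choose

theorem differsOnlyAt_edgeDirection (e : (hypercubeGraph d).edgeSet) {x y : Fin d → Bool}
    (he : (e : Sym2 (Fin d → Bool)) = s(x, y)) : DiffersOnlyAt x y (edgeDirection e) :=
  (exists_differsOnlyAt_of_mem_edgeSet e.2).choose_spec x y he

end Hypercube

section GrayCode

variable {d : ℕ} {x y : Fin d → Bool} {i : Fin d} {j : ℕ}

noncomputable def suffixParity (x : Fin d → Bool) (j : ℕ) : ZMod 2 :=
  ∑ k ∈ univ.filter (j ≤ ·.val), ((x k).toNat : ZMod 2)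

noncomputable def grayBits (x : Fin d → Bool) : Finset ℕ :=
  {j ∈ range d | suffixParity x j = 1}

/-- `x` is the `grayRank x`-th word of the binary reflected Gray code with coordinate `d - 1` most
significant: the binary digits of its rank are the suffix parities of `x`. -/
noncomputable def grayRank (x : Fin d → Bool) : ℕ :=
  ∑ j ∈ grayBits x, 2 ^ j

theorem suffixParity_eq_of_agree (h : ∀ k : Fin d, j ≤ k → x k = y k) :
    suffixParity x j = suffixParity y j :=
  sum_congr rfl fun k hk => by rw [h k (mem_filter.1 hk).2]

theorem suffixParity_eq_add_one (hi : x i ≠ y i) (hj : j ≤ i)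
    (h : ∀ k : Fin d, j ≤ k → k ≠ i → x k = y k) :
    suffixParity x j = suffixParity y j + 1 := by
  rw [← sub_eq_iff_eq_add', suffixParity, suffixParity, ← sum_sub_distrib,
    sum_eq_single_of_mem i (mem_filter.2 ⟨mem_univ _, hj⟩)
      fun k hk hki => by rw [h k (mem_filter.1 hk).2 hki, sub_self]]
  revert hi
  cases x i <;> cases y i <;> decide

theorem mem_grayBits_iff_not_mem (hi : x i ≠ y i) (hj : j ≤ i)
    (h : ∀ k : Fin d, j ≤ k → k ≠ i → x k = y k) : j ∈ grayBits x ↔ j ∉ grayBits y := by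
  have hjd : j ∈ range d := mem_range.2 (hj.trans_lt i.2)
  simp only [grayBits, mem_filter, hjd, true_and, suffixParity_eq_add_one hi hj h]
  generalize suffixParity y j = a
  revert a
  decide

theorem grayBits_injective : Function.Injective (grayBits (d := d)) := by
  intro x y hxy
  by_contra hne
  have hdiff : (univ.filter fun k => x k ≠ y k).Nonempty := by
    obtain ⟨k, hk⟩ := Function.ne_iff.1 hne
    exact ⟨k, mem_filter.2 ⟨mem_univ _, hk⟩⟩
  set i := (univ.filter fun k => x k ≠ y k).max' hdiff
  have hi : x i ≠ y i := (mem_filter.1 (max'_mem _ hdiff)).2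
  have hmax (k : Fin d) (hik : i ≤ k) (hki : k ≠ i) : x k = y k := by
    by_contra hk
    exact hki (le_antisymm (le_max' _ k (mem_filter.2 ⟨mem_univ _, hk⟩)) hik)
  have := mem_grayBits_iff_not_mem hi le_rfl hmax
  rw [hxy] at this
  exact iff_not_self this

theorem grayRank_injective : Function.Injective (grayRank (d := d)) :=
  (geomSum_injective le_rfl).comp grayBits_injective

theorem grayRank_lt (x : Fin d → Bool) : grayRank x < 2 ^ d :=
  Nat.geomSum_lt le_rfl fun _ hj => mem_range.1 (mem_filter.1 hj).1

theorem mirroredInBlock_grayRank (h : DiffersOnlyAt x y i) :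
    MirroredInBlock (2 ^ ((i : ℕ) + 1)) (grayRank x) (grayRank y) := by
  refine mirroredInBlock_sum_two_pow (fun j hj => ?_) fun j hj =>
    mem_grayBits_iff_not_mem h.ne (Nat.lt_succ_iff.1 hj) fun k _ => h.eq_of_ne
  simp only [grayBits, mem_filter, suffixParity_eq_of_agree fun k hk =>
    h.eq_of_ne (Fin.ne_of_gt (Nat.succ_le_iff.1 (hj.trans hk)))]

noncomputable def graySpine (d : ℕ) : (Fin d → Bool) ≃ Fin (Fintype.card (Fin d → Bool)) :=
  Equiv.ofBijective (fun x => ⟨grayRank x, by simpa using grayRank_lt x⟩)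
    ((Fintype.bijective_iff_injective_and_card _).2
      ⟨fun x y hxy => grayRank_injective (Fin.val_eq_of_eq hxy), (Fintype.card_fin _).symm⟩)

end GrayCode

noncomputable def grayBookEmbedding (d : ℕ) : MatchingBookEmbedding (hypercubeGraph d) d where
  ord := graySpine d
  page := edgeDirection
  matching e f hef hpage v hve hvf := by
    obtain ⟨w, hw⟩ := Sym2.mem_iff_exists.1 hve
    obtain ⟨w', hw'⟩ := Sym2.mem_iff_exists.1 hvf
    have hvw := differsOnlyAt_edgeDirection e hw
    have hvw' := differsOnlyAt_edgeDirection f hw'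
    rw [← hpage] at hvw'
    exact hef (Subtype.ext (by rw [hw, hw', hvw.right_unique hvw']))
  noncross e f hpage a b c c' he hf hac hcb hbc' := by
    have hab := mirroredInBlock_grayRank (differsOnlyAt_edgeDirection e he)
    have hcc' := mirroredInBlock_grayRank (differsOnlyAt_edgeDirection f hf)
    rw [← hpage] at hcc'
    exact hab.not_crossing hcc' hac hcb hbc'

theorem stmt_14_general (d : ℕ) :
    mbt (hypercubeGraph d) = d :=
  mbt_eq_of_le_degree (grayBookEmbedding d) (fun _ => false) (le_degree_hypercubeGraph _)

/-- The hypercube `Q_d` (`d ≥ 1`) is dispersable: `mbt (Q_d) = d`. -/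
theorem stmt_14 (d : ℕ) (hd : 1 ≤ d) :
    mbt (hypercubeGraph d) = d :=
  stmt_14_general d
end
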